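/- arXiv:2007.07246 — 2 statements merged into one kernel-verified Lean document; each statement's English description precedes it below -/
import Mathlib

section
/- For a generalized coarse-graining given by a POVM {Π_i} (positive semidefinite operators summing to the identity), observational entropy S_C(ρ) = -∑_i p_i ln(p_i/V_i) with p_i = tr(Π_i ρ) and V_i = tr(Π_i) satisfies S_vN(ρ) ≤ S_C(ρ) ≤ ln(dim H). -/
/-!
Diagonalize `ρ = U diag(λ) U*` and set `a i x = Re (U* Q i U) x x`. Then `a ≥ 0`, `∑ i, a i x = 1`,
`p i = ∑ x, a i x * λ x` and `V i = ∑ x, a i x`, so the statement becomes a classical one about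
the column-stochastic matrix `a`. Both bounds are instances of the log-sum inequality (Jensen for
the convex function `t ↦ t log t`): with weights `a i ·` for each `i` it gives the lower bound,
and with weights `V` and values `p / V` (where `∑ p = 1`, `∑ V = dim H`) the upper bound.
-/

open Finset Real

theorem Real.sum_mul_mul_log_div_sum_le {α : Type*} (s : Finset α) {w f : α → ℝ}
    (hw : ∀ x ∈ s, 0 ≤ w x) (hf : ∀ x ∈ s, 0 ≤ f x) :
    (∑ x ∈ s, w x * f x) * log ((∑ x ∈ s, w x * f x) / ∑ x ∈ s, w x)
      ≤ ∑ x ∈ s, w x * (f x * log (f x)) := by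
  rcases (sum_nonneg hw).eq_or_lt with hW | hW
  · have hw0 : ∀ x ∈ s, w x = 0 := (sum_eq_zero_iff_of_nonneg hw).1 hW.symm
    simp +contextual [hw0]
  have jensen := convexOn_mul_log.map_sum_le (t := s) (w := fun x => w x / ∑ y ∈ s, w y) (p := f)
    (fun x hx => div_nonneg (hw x hx) hW.le) (by rw [← sum_div, div_self hW.ne'])
    (fun x hx => Set.mem_Ici.2 (hf x hx))
  simp only [smul_eq_mul, div_mul_eq_mul_div, ← sum_div] at jensen
  exact (div_le_div_iff_of_pos_right hW).1 jensen

theorem Real.sum_mul_log_div_sum_le_sum_mul_log_div {α : Type*} (s : Finset α) {p v : α → ℝ}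
    (hp : ∀ x ∈ s, 0 ≤ p x) (hv : ∀ x ∈ s, 0 ≤ v x) (hpv : ∀ x ∈ s, v x = 0 → p x = 0) :
    (∑ x ∈ s, p x) * log ((∑ x ∈ s, p x) / ∑ x ∈ s, v x) ≤ ∑ x ∈ s, p x * log (p x / v x) := by
  have hcancel : ∀ x ∈ s, v x * (p x / v x) = p x := fun x hx => mul_div_cancel_of_imp' (hpv x hx)
  calc (∑ x ∈ s, p x) * log ((∑ x ∈ s, p x) / ∑ x ∈ s, v x)
      = (∑ x ∈ s, v x * (p x / v x)) * log ((∑ x ∈ s, v x * (p x / v x)) / ∑ x ∈ s, v x) := by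
        rw [sum_congr rfl hcancel]
    _ ≤ ∑ x ∈ s, v x * (p x / v x * log (p x / v x)) :=
        sum_mul_mul_log_div_sum_le s hv fun x hx => div_nonneg (hp x hx) (hv x hx)
    _ = ∑ x ∈ s, p x * log (p x / v x) :=
        sum_congr rfl fun x hx => by rw [← mul_assoc, hcancel x hx]

section Stochastic

variable {ι n : Type*} [Fintype ι] [Fintype n] {a : ι → n → ℝ} {q : n → ℝ}

theorem sum_mul_log_div_le_sum_mul_log (ha : ∀ i x, 0 ≤ a i x) (hq : ∀ x, 0 ≤ q x)
    (hcol : ∀ x, ∑ i, a i x = 1) :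
    ∑ i, (∑ x, a i x * q x) * log ((∑ x, a i x * q x) / ∑ x, a i x)
      ≤ ∑ x, q x * log (q x) :=
  calc _ ≤ ∑ i, ∑ x, a i x * (q x * log (q x)) :=
        sum_le_sum fun i _ => sum_mul_mul_log_div_sum_le _ (fun x _ => ha i x) fun x _ => hq x
    _ = ∑ x, q x * log (q x) := by
        rw [sum_comm]; simp only [← sum_mul, hcol, one_mul]

theorem neg_log_card_le_sum_mul_log_div (ha : ∀ i x, 0 ≤ a i x) (hq : ∀ x, 0 ≤ q x)
    (hq1 : ∑ x, q x = 1) (hcol : ∀ x, ∑ i, a i x = 1) :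
    -log (Fintype.card n)
      ≤ ∑ i, (∑ x, a i x * q x) * log ((∑ x, a i x * q x) / ∑ x, a i x) := by
  have hp1 : ∑ i, ∑ x, a i x * q x = 1 := by
    rw [sum_comm]; simp only [← sum_mul, hcol, one_mul, hq1]
  have hv : ∑ i, ∑ x, a i x = Fintype.card n := by
    rw [sum_comm]; simp [hcol]
  have hpv (i : ι) (_ : i ∈ univ) (h : ∑ x, a i x = 0) : ∑ x, a i x * q x = 0 := by
    have := (sum_eq_zero_iff_of_nonneg fun x _ => ha i x).1 h
    exact sum_eq_zero fun x hx => by rw [this x hx, zero_mul]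
  have := sum_mul_log_div_sum_le_sum_mul_log_div univ
    (fun i _ => sum_nonneg fun x _ => mul_nonneg (ha i x) (hq x))
    (fun i _ => sum_nonneg fun x _ => ha i x) hpv
  rwa [hp1, hv, one_mul, one_div, log_inv] at this

end Stochastic

open scoped Matrix ComplexOrder

namespace Matrix

variable {𝕜 n : Type*} [RCLike 𝕜] [Fintype n]

theorem trace_star_mul_mul_of_mem_unitaryGroup [DecidableEq n] {U : Matrix n n 𝕜}
    (hU : U ∈ unitaryGroup n 𝕜) (M : Matrix n n 𝕜) : (star U * M * U).trace = M.trace := by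
  rw [trace_mul_cycle, mem_unitaryGroup_iff.1 hU, one_mul]

theorem PosSemidef.re_star_mul_mul_apply_self_nonneg {M : Matrix n n 𝕜} (hM : M.PosSemidef)
    (U : Matrix n n 𝕜) (x : n) : 0 ≤ RCLike.re ((star U * M * U) x x) :=
  (RCLike.nonneg_iff.1 (hM.conjTranspose_mul_mul_same U).diag_nonneg).1

theorem IsHermitian.trace_mul_eq_sum_eigenvalues [DecidableEq n] {A : Matrix n n 𝕜}
    (hA : A.IsHermitian) (M : Matrix n n 𝕜) :
    (M * A).trace = ∑ x, (star (hA.eigenvectorUnitary : Matrix n n 𝕜) * M *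
      hA.eigenvectorUnitary) x x * hA.eigenvalues x := by
  conv_lhs => rw [hA.spectral_theorem, Unitary.conjStarAlgAut_apply, ← mul_assoc, ← mul_assoc,
    trace_mul_comm, ← mul_assoc, ← mul_assoc]
  simp [trace, mul_diagonal]

end Matrix

/-- For a POVM `{Q i}` (positive semidefinite operators summing to the identity),
observational entropy satisfies `S_vN(ρ) ≤ S_C(ρ) ≤ ln (dim H)`. -/
theorem obs_entropy_povm_bounds
    {n : Type*} [Fintype n] [DecidableEq n]
    {ι : Type*} [Fintype ι]
    (ρ : Matrix n n ℂ) (hρ : ρ.PosSemidef) (hρ1 : ρ.trace = 1)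
    (Q : ι → Matrix n n ℂ)
    (hQ : ∀ i, (Q i).PosSemidef)
    (hQsum : ∑ i, Q i = 1) :
    -∑ x, hρ.1.eigenvalues x * Real.log (hρ.1.eigenvalues x)
        ≤ -∑ i, (Q i * ρ).trace.re * Real.log ((Q i * ρ).trace.re / (Q i).trace.re) ∧
      -∑ i, (Q i * ρ).trace.re * Real.log ((Q i * ρ).trace.re / (Q i).trace.re)
        ≤ Real.log (Fintype.card n) := by
  set U : Matrix n n ℂ := (hρ.1.eigenvectorUnitary : Matrix n n ℂ)
  set a : ι → n → ℝ := fun i x => ((star U * Q i * U) x x).re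
  have ha (i : ι) (x : n) : 0 ≤ a i x := (hQ i).re_star_mul_mul_apply_self_nonneg U x
  have hcol (x : n) : ∑ i, a i x = 1 := by
    rw [← Complex.re_sum, ← Matrix.sum_apply, ← sum_mul, ← mul_sum, hQsum, mul_one,
      Matrix.mem_unitaryGroup_iff'.1 hρ.1.eigenvectorUnitary.2]
    simp
  have hp (i : ι) : (Q i * ρ).trace.re = ∑ x, a i x * hρ.1.eigenvalues x := by
    simp [hρ.1.trace_mul_eq_sum_eigenvalues, a, U]
  have hV (i : ι) : (Q i).trace.re = ∑ x, a i x := by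
    rw [← Matrix.trace_star_mul_mul_of_mem_unitaryGroup hρ.1.eigenvectorUnitary.2 (Q i),
      Matrix.trace, Complex.re_sum]
    rfl
  have hq1 : ∑ x, hρ.1.eigenvalues x = 1 := by
    simpa [hρ.1.trace_eq_sum_eigenvalues] using congrArg Complex.re hρ1
  simp only [hp, hV]
  exact ⟨neg_le_neg (sum_mul_log_div_le_sum_mul_log ha hρ.eigenvalues_nonneg hcol),
    by linarith [neg_log_card_le_sum_mul_log_div ha hρ.eigenvalues_nonneg hq1 hcol]⟩
end

section
/- If the POVM {Π_i} refines the spectral projectors of ρ, i.e., each eigenprojector P_ρ of ρ can be written as P_ρ = ∑_{i ∈ I^(ρ)} Π_i for disjoint index sets I^(ρ) partitioning the index set, then S_C(ρ) = S_vN(ρ). -/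
open scoped Matrix ComplexOrder

/-!
Since `P s` is the sum of the `Q i` over the fibre `f ⁻¹' {s}`, every `Q i` satisfies
`0 ≤ Q i ≤ P (f i)`, so `tr (Q i P t)` is squeezed between `0` and `tr (P (f i) P t) = 0` for
`t ≠ f i`. Hence `tr (Q i ρ) = e (f i) tr (Q i)`: the outcome `i` has probability `p i` equal to
its volume `V i` times the eigenvalue `e (f i)`, so `p i ln (p i / V i) = V i e (f i) ln e (f i)`,
and summing over each fibre turns the volumes into `tr (P s)`.
-/

namespace Matrix

variable {𝕜 n : Type*} [RCLike 𝕜] [Fintype n]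

open scoped MatrixOrder in
theorem PosSemidef.trace_mul_nonneg [DecidableEq n] {A B : Matrix n n 𝕜}
    (hA : A.PosSemidef) (hB : B.PosSemidef) : 0 ≤ (A * B).trace := by
  have hsqrt : CFC.sqrt B * CFC.sqrt B = B := CFC.sqrt_mul_sqrt_self B hB.nonneg
  have hconj : (CFC.sqrt B * A * (CFC.sqrt B)ᴴ).PosSemidef :=
    hA.mul_mul_conjTranspose_same (CFC.sqrt B)
  rw [(nonneg_iff_posSemidef.mp (CFC.sqrt_nonneg B)).isHermitian.eq] at hconj
  calc 0 ≤ (CFC.sqrt B * A * CFC.sqrt B).trace := hconj.trace_nonneg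
    _ = (A * B).trace := by rw [trace_mul_cycle, hsqrt, trace_mul_comm]

theorem PosSemidef.trace_mul_eq_zero_of_sub [DecidableEq n] {A B C : Matrix n n 𝕜}
    (hA : A.PosSemidef) (hBA : (B - A).PosSemidef) (hC : C.PosSemidef)
    (hBC : (B * C).trace = 0) : (A * C).trace = 0 := by
  have hsub : 0 ≤ ((B - A) * C).trace := hBA.trace_mul_nonneg hC
  rw [sub_mul, trace_sub, hBC, zero_sub, neg_nonneg] at hsub
  exact le_antisymm hsub (hA.trace_mul_nonneg hC)

end Matrix

open Matrix

section Refinement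

variable {𝕜 n ι σ : Type*} [RCLike 𝕜] [Fintype ι] [DecidableEq σ]
  {Q : ι → Matrix n n 𝕜} {P : σ → Matrix n n 𝕜} {f : ι → σ}

theorem posSemidef_fiberSum_sub (hQ : ∀ i, (Q i).PosSemidef)
    (href : ∀ s, P s = ∑ i ∈ Finset.univ.filter (f · = s), Q i) (i : ι) :
    (P (f i) - Q i).PosSemidef := by
  classical
  have hmem : i ∈ Finset.univ.filter (f · = f i) := by simp
  rw [href, ← Finset.add_sum_erase _ _ hmem, add_sub_cancel_left]
  exact posSemidef_sum _ fun j _ => hQ j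

variable [Fintype n] [DecidableEq n]

theorem trace_mul_fiberSum_eq_zero (hQ : ∀ i, (Q i).PosSemidef)
    (href : ∀ s, P s = ∑ i ∈ Finset.univ.filter (f · = s), Q i)
    (horth : ∀ s t, s ≠ t → P s * P t = 0) {i : ι} {t : σ} (ht : t ≠ f i) :
    (Q i * P t).trace = 0 := by
  have hP : ∀ s, (P s).PosSemidef := fun s => href s ▸ posSemidef_sum _ fun j _ => hQ j
  refine (hQ i).trace_mul_eq_zero_of_sub (posSemidef_fiberSum_sub hQ href i) (hP t) ?_
  rw [horth _ _ ht.symm, trace_zero]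

variable [Fintype σ]

theorem trace_mul_fiberSum_self (hQ : ∀ i, (Q i).PosSemidef)
    (href : ∀ s, P s = ∑ i ∈ Finset.univ.filter (f · = s), Q i)
    (horth : ∀ s t, s ≠ t → P s * P t = 0) (hcomp : ∑ s, P s = 1) (i : ι) :
    (Q i * P (f i)).trace = (Q i).trace := by
  calc (Q i * P (f i)).trace = ∑ t, (Q i * P t).trace :=
        (Fintype.sum_eq_single _ fun t ht => trace_mul_fiberSum_eq_zero hQ href horth ht).symm
    _ = (Q i).trace := by rw [← trace_sum, ← Finset.mul_sum, hcomp, mul_one]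

theorem trace_mul_sum_smul_fiberSum (hQ : ∀ i, (Q i).PosSemidef)
    (href : ∀ s, P s = ∑ i ∈ Finset.univ.filter (f · = s), Q i)
    (horth : ∀ s t, s ≠ t → P s * P t = 0) (hcomp : ∑ s, P s = 1) (c : σ → 𝕜) (i : ι) :
    (Q i * ∑ s, c s • P s).trace = c (f i) * (Q i).trace := by
  rw [Finset.mul_sum, trace_sum, Fintype.sum_eq_single (f i), Matrix.mul_smul, trace_smul,
    trace_mul_fiberSum_self hQ href horth hcomp, smul_eq_mul]
  intro t ht
  rw [Matrix.mul_smul, trace_smul, trace_mul_fiberSum_eq_zero hQ href horth ht, smul_zero]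

end Refinement

theorem Real.mul_log_div_of_eq_mul {p V c : ℝ} (hp : p = c * V) :
    p * Real.log (p / V) = V * (c * Real.log c) := by
  rcases eq_or_ne V 0 with rfl | hV
  · simp [hp]
  · rw [hp, mul_div_cancel_right₀ _ hV]
    ring

theorem obs_entropy_eq_vN_of_refinement_general
    {n ι σ : Type*} [Fintype n] [DecidableEq n] [Fintype ι] [Fintype σ] [DecidableEq σ]
    (ρ : Matrix n n ℂ)
    (e : σ → ℝ)
    (P : σ → Matrix n n ℂ)
    (horth : ∀ s t, s ≠ t → P s * P t = 0)
    (hcomp : ∑ s, P s = 1)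
    (hspec : ρ = ∑ s, (e s : ℂ) • P s)
    (Q : ι → Matrix n n ℂ) (hQ : ∀ i, (Q i).PosSemidef)
    (f : ι → σ)
    (href : ∀ s, P s = ∑ i ∈ Finset.univ.filter (f · = s), Q i) :
    -∑ i, (Q i * ρ).trace.re * Real.log ((Q i * ρ).trace.re / (Q i).trace.re)
      = -∑ s, (P s).trace.re * (e s * Real.log (e s)) := by
  have hprob : ∀ i, (Q i * ρ).trace.re = e (f i) * (Q i).trace.re := fun i => by
    rw [hspec, trace_mul_sum_smul_fiberSum hQ href horth hcomp, Complex.re_ofReal_mul]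
  simp_rw [Real.mul_log_div_of_eq_mul (hprob _), href, trace_sum, Complex.re_sum,
    Finset.sum_mul]
  rw [← Finset.sum_fiberwise Finset.univ f]
  refine congrArg _ (Finset.sum_congr rfl fun s _ => Finset.sum_congr rfl fun i hi => ?_)
  rw [(Finset.mem_filter.mp hi).2]

/-- If the POVM `{Q i}` refines the spectral projectors of `ρ`, i.e., each
eigenprojector `P s` (of eigenvalue `e s`) is a sum of POVM elements over a block of a
partition of the index set, then observational entropy equals the von Neumann entropy
`-∑ s, tr (P s) * e s * ln (e s)`. -/
theorem obs_entropy_eq_vN_of_refinement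
    {n ι σ : Type*} [Fintype n] [DecidableEq n] [Fintype ι] [Fintype σ] [DecidableEq σ]
    (ρ : Matrix n n ℂ) (hρ : ρ.PosSemidef) (hρ1 : ρ.trace = 1)
    (e : σ → ℝ) (he : Function.Injective e)
    (P : σ → Matrix n n ℂ)
    (hherm : ∀ s, (P s).IsHermitian)
    (hproj : ∀ s, P s * P s = P s)
    (horth : ∀ s t, s ≠ t → P s * P t = 0)
    (hcomp : ∑ s, P s = 1)
    (hspec : ρ = ∑ s, (e s : ℂ) • P s)
    (Q : ι → Matrix n n ℂ) (hQ : ∀ i, (Q i).PosSemidef) (hQsum : ∑ i, Q i = 1)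
    (f : ι → σ)
    (href : ∀ s, P s = ∑ i ∈ Finset.univ.filter (f · = s), Q i) :
    -∑ i, (Q i * ρ).trace.re * Real.log ((Q i * ρ).trace.re / (Q i).trace.re)
      = -∑ s, (P s).trace.re * (e s * Real.log (e s)) :=
  obs_entropy_eq_vN_of_refinement_general ρ e P horth hcomp hspec Q hQ f href
end
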